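/- Let f : ℝ^d → ℝ be C¹-smooth with ρ-Lipschitz gradient, r : ℝ^d → ℝ ∪ {+∞} proper closed convex, and set φ = f + r. Let (Ω, F, P) be a probability space and G : ℝ^d × Ω → ℝ^d measurable with ∫ G(x,ξ) dP(ξ) = ∇f(x) and ∫ ‖G(x,ξ) − ∇f(x)‖² dP(ξ) ≤ σ², for all x ∈ dom r. Fix ρ̄ > ρ, α ∈ (0, 1/ρ̄], x ∈ dom r, and set x̂ = prox_{φ/ρ̄}(x); suppose ρ̄(x − x̂) − ∇f(x̂) ∈ ∂r(x̂). Then the proximal stochastic gradient step x⁺(ξ) = prox_{αr}(x − αG(x,ξ)) satisfies ∫_Ω φ_{1/ρ̄}(x⁺(ξ)) dP(ξ) ≤ φ_{1/ρ̄}(x) − (α(ρ̄ − ρ)ρ̄/2)‖x − x̂‖² + α²ρ̄σ²/2. -/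

import Mathlib

/-!
Since `ρ̄(x − x̂) − ∇f(x̂) ∈ ∂r(x̂)`, the point `x̂` is the prox point of `αr` at
`x̂ + α(ρ̄(x − x̂) − ∇f(x̂))`, and prox maps of a convex function are nonexpansive. Hence
`‖x⁺(ξ) − x̂‖ ≤ ‖m + α(∇f(x) − G(x,ξ))‖` with `m = (1 − αρ̄)(x − x̂) + α(∇f(x̂) − ∇f(x))`, and
`‖m‖² ≤ (1 − α(ρ̄ − ρ))‖x − x̂‖²` by the Lipschitz bound on `∇f`. Testing the infimum defining the
envelope at `x⁺(ξ)` against `y = x̂` gives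
`φ_{1/ρ̄}(x⁺(ξ)) ≤ φ_{1/ρ̄}(x) − (ρ̄/2)‖x − x̂‖² + (ρ̄/2)‖x⁺(ξ) − x̂‖²`; the noise has mean zero, so
after expanding the square only `‖m‖²` and the variance survive in expectation.

For the expectation to make sense, `x⁺` is measurable because it depends Lipschitz-continuously
on `G(x,ξ)`, and `φ_{1/ρ̄}(x⁺)` is integrable because weak convexity (`ρ < ρ̄`) bounds the envelope
below by a quadratic.
-/

open MeasureTheory RealInnerProductSpace

def ERealConvexOn {E : Type*} [AddCommMonoid E] [SMul ℝ E]
    (s : Set E) (g : E → EReal) : Prop :=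
  ∀ x ∈ s, ∀ y ∈ s, ∀ a b : ℝ, 0 ≤ a → 0 ≤ b → a + b = 1 →
    g (a • x + b • y) ≤ (a : EReal) * g x + (b : EReal) * g y

open Set Filter Topology

section InnerProductSpace

variable {E : Type*} [NormedAddCommGroup E] [InnerProductSpace ℝ E]

theorem neg_norm_sq_div_le_inner_add_half_mul_norm_sq {k : ℝ} (hk : 0 < k) (w d : E) :
    -(‖w‖ ^ 2 / (2 * k)) ≤ ⟪w, d⟫ + k / 2 * ‖d‖ ^ 2 := by
  have hsq : 0 ≤ ‖w + k • d‖ ^ 2 := sq_nonneg _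
  rw [norm_add_sq_real, inner_smul_right, norm_smul, Real.norm_of_nonneg hk.le] at hsq
  rw [neg_le_iff_add_nonneg', div_add' _ _ _ (by positivity)]
  apply div_nonneg _ (by positivity)
  nlinarith

theorem norm_le_of_norm_sq_le_inner {d e : E} (h : ‖d‖ ^ 2 ≤ ⟪e, d⟫) : ‖d‖ ≤ ‖e‖ := by
  have := h.trans (real_inner_le_norm e d)
  nlinarith [norm_nonneg d, norm_nonneg e]

variable [CompleteSpace E]

theorem quadratic_lower_bound_of_lipschitz_gradient {f : E → ℝ} (hf : Differentiable ℝ f)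
    {ρ : ℝ} (hflip : ∀ u v : E, ‖gradient f u - gradient f v‖ ≤ ρ * ‖u - v‖) (z y : E) :
    f z + ⟪gradient f z, y - z⟫ - ρ / 2 * ‖y - z‖ ^ 2 ≤ f y := by
  set w := y - z
  let h : ℝ → ℝ := fun t => f (z + t • w) - t * ⟪gradient f z, w⟫ + ρ / 2 * t ^ 2 * ‖w‖ ^ 2
  have hderiv : ∀ t, HasDerivAt h
      (⟪gradient f (z + t • w), w⟫ - ⟪gradient f z, w⟫ + ρ * t * ‖w‖ ^ 2) t := by
    intro t
    have hline : HasDerivAt (fun t : ℝ => z + t • w) w t := by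
      simpa using ((hasDerivAt_id t).smul_const w).const_add z
    have hcomp := (hf _).hasGradientAt.hasFDerivAt.comp_hasDerivAt t hline
    simp only [InnerProductSpace.toDual_apply_apply] at hcomp
    refine ((hcomp.sub ((hasDerivAt_id t).mul_const _)).add
      (((hasDerivAt_pow 2 t).const_mul (ρ / 2)).mul_const (‖w‖ ^ 2))).congr_deriv ?_
    simp only [Nat.cast_ofNat]
    ring
  have hmono : MonotoneOn h (Ici 0) := by
    refine monotoneOn_of_hasDerivWithinAt_nonneg (convex_Ici 0)
      (HasDerivAt.continuousOn fun t _ => hderiv t) (fun t _ => (hderiv t).hasDerivWithinAt) ?_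
    intro t ht
    rw [interior_Ici, mem_Ioi] at ht
    have hlip : ‖gradient f (z + t • w) - gradient f z‖ * ‖w‖ ≤ ρ * t * ‖w‖ ^ 2 := by
      calc ‖gradient f (z + t • w) - gradient f z‖ * ‖w‖ ≤ ρ * ‖z + t • w - z‖ * ‖w‖ := by
            gcongr; exact hflip _ _
        _ = ρ * t * ‖w‖ ^ 2 := by
            rw [add_sub_cancel_left, norm_smul, Real.norm_of_nonneg ht.le]; ring
    have := real_inner_le_norm (gradient f z - gradient f (z + t • w)) w
    rw [norm_sub_rev, inner_sub_left] at this
    linarith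
  have h01 := hmono (mem_Ici.2 le_rfl) (mem_Ici.2 zero_le_one) zero_le_one
  simp only [h, zero_smul, add_zero, one_smul, add_sub_cancel, w] at h01
  linarith

end InnerProductSpace

theorem measurable_of_dist_le_mul {Ω α β : Type*} [MeasurableSpace Ω] [PseudoMetricSpace α]
    [MeasurableSpace α] [OpensMeasurableSpace α] [MetricSpace β] [MeasurableSpace β]
    [BorelSpace β] {g : Ω → α} {s : Ω → β} (hg : Measurable g) (K : NNReal)
    (hs : ∀ ξ ξ', dist (s ξ) (s ξ') ≤ K * dist (g ξ) (g ξ')) : Measurable s := by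
  -- `s` factors through `g` via a Lipschitz map on `range g`
  let F : range g → β := fun w => s w.2.choose
  have hF : F ∘ rangeFactorization g = s := by
    funext ξ
    have hξ := (mem_range_self ξ : g ξ ∈ range g).choose_spec
    show s _ = s ξ
    exact dist_le_zero.1 (by simpa [hξ] using hs (mem_range_self (f := g) ξ).choose ξ)
  have hFlip : LipschitzWith K F := LipschitzWith.of_dist_le_mul fun w w' => by
    simpa [F, w.2.choose_spec, w'.2.choose_spec, Subtype.dist_eq] using hs w.2.choose w'.2.choose
  rw [← hF]
  exact hFlip.continuous.measurable.comp hg.subtype_mk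

theorem upperSemicontinuous_of_coe_eq_iInf_add {X ι : Type*} [TopologicalSpace X]
    {env : X → ℝ} (c : ι → EReal) {g : ι → X → ℝ} (hg : ∀ i, Continuous (g i))
    (henv : ∀ z, (env z : EReal) = ⨅ i, c i + g i z) : UpperSemicontinuous env := by
  have hcont : ∀ i, Continuous fun z => c i + (g i z : EReal) := fun i =>
    continuous_iff_continuousAt.2 fun z =>
      ContinuousAt.comp (f := fun z => (c i, (g i z : EReal)))
        (EReal.continuousAt_add (Or.inr (EReal.coe_ne_bot _)) (Or.inr (EReal.coe_ne_top _)))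
        (continuous_const.prodMk (continuous_coe_real_ereal.comp (hg i))).continuousAt
  have husc : UpperSemicontinuous fun z => (env z : EReal) := by
    simp_rw [henv]
    exact upperSemicontinuous_iInf fun i => (hcont i).upperSemicontinuous
  intro z b hb
  filter_upwards [husc z b (EReal.coe_lt_coe_iff.2 hb)] with z' hz'
  exact EReal.coe_lt_coe_iff.1 hz'

theorem ERealConvexOn.convexOn_toReal {E : Type*} [AddCommGroup E] [Module ℝ E] {r : E → EReal}
    (hr : ERealConvexOn univ r) (hbot : ∀ y, r y ≠ ⊥) :
    ConvexOn ℝ {y | r y ≠ ⊤} fun y => (r y).toReal := by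
  have key : ∀ x, r x ≠ ⊤ → ∀ y, r y ≠ ⊤ → ∀ a b : ℝ, 0 ≤ a → 0 ≤ b → a + b = 1 →
      r (a • x + b • y) ≤ ((a * (r x).toReal + b * (r y).toReal : ℝ) : EReal) := by
    intro x hx y hy a b ha hb hab
    have h := hr x trivial y trivial a b ha hb hab
    rwa [← EReal.coe_toReal hx (hbot x), ← EReal.coe_toReal hy (hbot y), ← EReal.coe_mul,
      ← EReal.coe_mul, ← EReal.coe_add] at h
  refine ⟨fun x hx y hy a b ha hb hab =>
    ne_top_of_le_ne_top (EReal.coe_ne_top _) (key x hx y hy a b ha hb hab),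
    fun x hx y hy a b ha hb hab => ?_⟩
  simpa only [smul_eq_mul, EReal.toReal_coe] using
    EReal.toReal_le_toReal (key x hx y hy a b ha hb hab) (hbot _) (EReal.coe_ne_top _)

section Proximal

variable {E : Type*} [NormedAddCommGroup E]

def IsProxPoint (r : E → EReal) (a : ℝ) (z p : E) : Prop :=
  ∀ y, r p + ((1 / (2 * a) * ‖p - z‖ ^ 2 : ℝ) : EReal)
    ≤ r y + ((1 / (2 * a) * ‖y - z‖ ^ 2 : ℝ) : EReal)

theorem IsProxPoint.ne_top {r : E → EReal} {a : ℝ} {z p y : E} (h : IsProxPoint r a z p)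
    (hy : r y ≠ ⊤) : r p ≠ ⊤ :=
  (EReal.add_ne_top_iff_ne_top_left (EReal.coe_ne_bot _) (EReal.coe_ne_top _)).1
    (ne_top_of_le_ne_top (EReal.add_ne_top hy (EReal.coe_ne_top _)) (h y))

variable [InnerProductSpace ℝ E]

theorem ConvexOn.inner_le_of_forall_add_norm_sq_le {D : Set E} {R : E → ℝ}
    (hR : ConvexOn ℝ D R) {a : ℝ} (ha : 0 < a) {z p : E} (hp : p ∈ D)
    (hmin : ∀ y ∈ D, R p + 1 / (2 * a) * ‖p - z‖ ^ 2 ≤ R y + 1 / (2 * a) * ‖y - z‖ ^ 2)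
    {y : E} (hy : y ∈ D) : R p + ⟪a⁻¹ • (z - p), y - p⟫ ≤ R y := by
  -- compare `p` with `(1 - t) • p + t • y`, then let `t → 0⁺`
  have hstep : ∀ t ∈ Ioo (0 : ℝ) 1,
      R p + ⟪a⁻¹ • (z - p), y - p⟫ ≤ R y + t * (1 / (2 * a) * ‖y - p‖ ^ 2) := by
    rintro t ⟨ht0, ht1⟩
    have hconv := hR.2 hp hy (sub_nonneg.2 ht1.le) ht0.le (sub_add_cancel 1 t)
    have hmin_t := hmin _ (hR.1 hp hy (sub_nonneg.2 ht1.le) ht0.le (sub_add_cancel 1 t))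
    have hexp : ‖(1 - t) • p + t • y - z‖ ^ 2
        = ‖p - z‖ ^ 2 + 2 * (t * ⟪p - z, y - p⟫) + t ^ 2 * ‖y - p‖ ^ 2 := by
      rw [show (1 - t) • p + t • y - z = (p - z) + t • (y - p) by module, norm_add_sq_real,
        inner_smul_right, norm_smul, mul_pow, Real.norm_eq_abs, sq_abs]
    have hinner : ⟪a⁻¹ • (z - p), y - p⟫ = -(2 * (1 / (2 * a)) * ⟪p - z, y - p⟫) := by
      rw [real_inner_smul_left, ← neg_sub p z, inner_neg_left]
      field_simp
    rw [hexp] at hmin_t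
    rw [smul_eq_mul, smul_eq_mul] at hconv
    refine le_of_mul_le_mul_left ?_ ht0
    rw [hinner]
    nlinarith
  have hlim : Tendsto (fun t : ℝ => R y + t * (1 / (2 * a) * ‖y - p‖ ^ 2)) (𝓝[>] 0) (𝓝 (R y)) :=
    (Continuous.tendsto' (by fun_prop) 0 _ (by simp)).mono_left nhdsWithin_le_nhds
  exact ge_of_tendsto hlim (eventually_of_mem (Ioo_mem_nhdsGT one_pos) hstep)

def HasSubgradientAt (r : E → EReal) (u p : E) : Prop :=
  ∀ y, r p + ((⟪u, y - p⟫ : ℝ) : EReal) ≤ r y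

variable {r : E → EReal}

theorem HasSubgradientAt.inner_sub_nonneg {u v p q : E} (hu : HasSubgradientAt r u p)
    (hv : HasSubgradientAt r v q) (hp : r p ≠ ⊤) (hp' : r p ≠ ⊥) (hq : r q ≠ ⊤) (hq' : r q ≠ ⊥) :
    0 ≤ ⟪u - v, p - q⟫ := by
  have h1 := hu q
  have h2 := hv p
  rw [← EReal.coe_toReal hp hp', ← EReal.coe_toReal hq hq'] at h1 h2
  norm_cast at h1 h2
  have hneg : ⟪u, q - p⟫ = -⟪u, p - q⟫ := by rw [← inner_neg_right, neg_sub]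
  rw [inner_sub_left]
  linarith

theorem HasSubgradientAt.norm_sub_le {a : ℝ} (ha : 0 < a) {z w p q : E}
    (hp : HasSubgradientAt r (a⁻¹ • (z - p)) p) (hq : HasSubgradientAt r (a⁻¹ • (w - q)) q)
    (hpt : r p ≠ ⊤) (hpb : r p ≠ ⊥) (hqt : r q ≠ ⊤) (hqb : r q ≠ ⊥) : ‖p - q‖ ≤ ‖z - w‖ := by
  have h := hp.inner_sub_nonneg hq hpt hpb hqt hqb
  rw [← smul_sub, real_inner_smul_left, show z - p - (w - q) = (z - w) - (p - q) by abel,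
    inner_sub_left, real_inner_self_eq_norm_sq] at h
  exact norm_le_of_norm_sq_le_inner (by nlinarith [inv_pos.2 ha])

theorem IsProxPoint.hasSubgradientAt (hr : ERealConvexOn univ r) (hbot : ∀ y, r y ≠ ⊥)
    {a : ℝ} (ha : 0 < a) {z p : E} (h : IsProxPoint r a z p) (hp : r p ≠ ⊤) :
    HasSubgradientAt r (a⁻¹ • (z - p)) p := by
  intro y
  by_cases hy : r y = ⊤
  · simp [hy]
  have hmin : ∀ y', r y' ≠ ⊤ → (r p).toReal + 1 / (2 * a) * ‖p - z‖ ^ 2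
      ≤ (r y').toReal + 1 / (2 * a) * ‖y' - z‖ ^ 2 := fun y' hy' => by
    have := h y'
    rw [← EReal.coe_toReal hp (hbot p), ← EReal.coe_toReal hy' (hbot y')] at this
    exact_mod_cast this
  rw [← EReal.coe_toReal hp (hbot p), ← EReal.coe_toReal hy (hbot y)]
  exact_mod_cast (hr.convexOn_toReal hbot).inner_le_of_forall_add_norm_sq_le ha hp hmin hy

theorem measurable_of_isProxPoint [MeasurableSpace E] [BorelSpace E] {Ω : Type*}
    [MeasurableSpace Ω] (hr : ERealConvexOn univ r) (hbot : ∀ y, r y ≠ ⊥) {a : ℝ} (ha : 0 < a)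
    {x : E} {g s : Ω → E} (hg : Measurable g) (hs : ∀ ξ, IsProxPoint r a (x - a • g ξ) (s ξ))
    (hdom : ∀ ξ, r (s ξ) ≠ ⊤) : Measurable s := by
  refine measurable_of_dist_le_mul hg a.toNNReal fun ξ ξ' => ?_
  rw [dist_eq_norm, dist_eq_norm, Real.coe_toNNReal _ ha.le]
  refine (((hs ξ).hasSubgradientAt hr hbot ha (hdom ξ)).norm_sub_le ha
    ((hs ξ').hasSubgradientAt hr hbot ha (hdom ξ')) (hdom ξ) (hbot _) (hdom ξ')
    (hbot _)).trans_eq ?_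
  rw [sub_sub_sub_cancel_left, ← smul_sub, norm_smul, Real.norm_of_nonneg ha.le, norm_sub_rev]

end Proximal

theorem norm_sq_relaxed_step_le {E : Type*} [NormedAddCommGroup E] [InnerProductSpace ℝ E]
    {T : E → E} {ρ : ℝ} (hρ : 0 ≤ ρ) (hT : ∀ u v, ‖T u - T v‖ ≤ ρ * ‖u - v‖) {ρb a : ℝ}
    (hρb : ρ ≤ ρb) (ha : 0 ≤ a) (haρb : a * ρb ≤ 1) (u v : E) :
    ‖(1 - a * ρb) • (u - v) + a • (T v - T u)‖ ^ 2 ≤ (1 - a * (ρb - ρ)) * ‖u - v‖ ^ 2 := by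
  have hnorm : ‖(1 - a * ρb) • (u - v) + a • (T v - T u)‖ ≤ (1 - a * (ρb - ρ)) * ‖u - v‖ := by
    calc _ ≤ (1 - a * ρb) * ‖u - v‖ + a * (ρ * ‖u - v‖) := by
          refine (norm_add_le _ _).trans (add_le_add ?_ ?_)
          · rw [norm_smul, Real.norm_of_nonneg (by linarith)]
          · rw [norm_smul, Real.norm_of_nonneg ha, norm_sub_rev u v]
            exact mul_le_mul_of_nonneg_left (hT v u) ha
      _ = (1 - a * (ρb - ρ)) * ‖u - v‖ := by ring
  have ht0 : 0 ≤ a * (ρb - ρ) := mul_nonneg ha (sub_nonneg.2 hρb)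
  have ht1 : a * (ρb - ρ) ≤ 1 := by nlinarith
  calc _ ≤ ((1 - a * (ρb - ρ)) * ‖u - v‖) ^ 2 := pow_le_pow_left₀ (norm_nonneg _) hnorm 2
    _ ≤ (1 - a * (ρb - ρ)) * ‖u - v‖ ^ 2 := by
      rw [mul_pow]
      exact mul_le_mul_of_nonneg_right (by nlinarith) (sq_nonneg _)

section MoreauEnvelope

variable {E : Type*} [NormedAddCommGroup E]

def IsMoreauEnvelope (f : E → ℝ) (r : E → EReal) (ρb : ℝ) (env : E → ℝ) : Prop :=
  ∀ z, (env z : EReal) = ⨅ y, (f y : EReal) + r y + ((ρb / 2 * ‖y - z‖ ^ 2 : ℝ) : EReal)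

def IsMoreauProxPoint (f : E → ℝ) (r : E → EReal) (ρb : ℝ) (x xhat : E) : Prop :=
  ∀ y, (f xhat : EReal) + r xhat + ((ρb / 2 * ‖xhat - x‖ ^ 2 : ℝ) : EReal)
    ≤ (f y : EReal) + r y + ((ρb / 2 * ‖y - x‖ ^ 2 : ℝ) : EReal)

variable {f : E → ℝ} {r : E → EReal} {ρb : ℝ} {env : E → ℝ} {x xhat : E}

theorem coe_env_eq_of_isMoreauProxPoint
    (henv : IsMoreauEnvelope f r ρb env) (hmin : IsMoreauProxPoint f r ρb x xhat) :
    (env x : EReal) = f xhat + r xhat + ((ρb / 2 * ‖xhat - x‖ ^ 2 : ℝ) : EReal) := by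
  rw [henv]
  exact le_antisymm (iInf_le _ xhat) (le_iInf hmin)

theorem ne_top_of_isMoreauProxPoint
    (henv : IsMoreauEnvelope f r ρb env) (hmin : IsMoreauProxPoint f r ρb x xhat) :
    r xhat ≠ ⊤ := fun h => by
  have hx := coe_env_eq_of_isMoreauProxPoint henv hmin
  rw [h, EReal.coe_add_top, EReal.top_add_coe] at hx
  exact EReal.coe_ne_top _ hx

theorem env_le_of_isMoreauProxPoint
    (henv : IsMoreauEnvelope f r ρb env) (hmin : IsMoreauProxPoint f r ρb x xhat)
    (hbot : r xhat ≠ ⊥) (z : E) :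
    env z ≤ env x - ρb / 2 * ‖x - xhat‖ ^ 2 + ρb / 2 * ‖z - xhat‖ ^ 2 := by
  have hz : (env z : EReal) ≤ f xhat + r xhat + ((ρb / 2 * ‖xhat - z‖ ^ 2 : ℝ) : EReal) := by
    rw [henv]
    exact iInf_le _ xhat
  have hx := coe_env_eq_of_isMoreauProxPoint henv hmin
  rw [← EReal.coe_toReal (ne_top_of_isMoreauProxPoint henv hmin) hbot] at hz hx
  norm_cast at hz hx
  rw [norm_sub_rev z, norm_sub_rev x]
  linarith

variable [InnerProductSpace ℝ E] [CompleteSpace E]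

theorem le_env_of_isMoreauProxPoint
    (henv : IsMoreauEnvelope f r ρb env) (hmin : IsMoreauProxPoint f r ρb x xhat)
    (hbot : ∀ y, r y ≠ ⊥) (hf : Differentiable ℝ f) {ρ : ℝ}
    (hflip : ∀ u v : E, ‖gradient f u - gradient f v‖ ≤ ρ * ‖u - v‖) (hρb : ρ < ρb)
    (hstat : HasSubgradientAt r (ρb • (x - xhat) - gradient f xhat) xhat) (z : E) :
    env x - ρb / 2 * ‖x - xhat‖ ^ 2 - ρb ^ 2 / (2 * (ρb - ρ)) * ‖x - z‖ ^ 2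
      + ρb / 2 * ‖z - xhat‖ ^ 2 ≤ env z := by
  have hxhat := ne_top_of_isMoreauProxPoint henv hmin
  have hx := coe_env_eq_of_isMoreauProxPoint henv hmin
  rw [← EReal.coe_toReal hxhat (hbot xhat)] at hx
  norm_cast at hx
  rw [← EReal.coe_le_coe_iff, henv]
  refine le_iInf fun y => ?_
  by_cases hy : r y = ⊤
  · rw [hy, EReal.coe_add_top, EReal.top_add_coe]
    exact le_top
  have hsub := hstat y
  rw [← EReal.coe_toReal hxhat (hbot xhat), ← EReal.coe_toReal hy (hbot y)] at hsub
  rw [← EReal.coe_toReal hy (hbot y)]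
  norm_cast at hsub ⊢
  have hdesc := quadratic_lower_bound_of_lipschitz_gradient hf hflip xhat y
  -- the weak convexity margin `ρb - ρ` lets us complete the square in `y - xhat`
  have hsq := neg_norm_sq_div_le_inner_add_half_mul_norm_sq (sub_pos.2 hρb) (ρb • (x - z))
    (y - xhat)
  rw [norm_smul, mul_pow, Real.norm_eq_abs, sq_abs, mul_div_right_comm] at hsq
  have hyz : ‖y - z‖ ^ 2 = ‖y - xhat‖ ^ 2 - 2 * ⟪y - xhat, z - xhat⟫ + ‖z - xhat‖ ^ 2 := by
    rw [← norm_sub_sq_real, sub_sub_sub_cancel_right]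
  have hinner : ⟪gradient f xhat, y - xhat⟫ + ⟪ρb • (x - xhat) - gradient f xhat, y - xhat⟫
      - ρb * ⟪y - xhat, z - xhat⟫ = ⟪ρb • (x - z), y - xhat⟫ := by
    rw [← real_inner_smul_right, real_inner_comm (ρb • (z - xhat)), ← inner_add_left,
      ← inner_sub_left]
    congr 1
    module
  rw [norm_sub_rev xhat x] at hx
  rw [hyz]
  linarith

theorem exists_abs_env_le_of_isMoreauProxPoint
    (henv : IsMoreauEnvelope f r ρb env) (hmin : IsMoreauProxPoint f r ρb x xhat)
    (hbot : ∀ y, r y ≠ ⊥) (hf : Differentiable ℝ f) {ρ : ℝ}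
    (hflip : ∀ u v : E, ‖gradient f u - gradient f v‖ ≤ ρ * ‖u - v‖) (hρb : ρ < ρb)
    (hρb₀ : 0 ≤ ρb)
    (hstat : HasSubgradientAt r (ρb • (x - xhat) - gradient f xhat) xhat) :
    ∃ C K : ℝ, 0 ≤ K ∧ ∀ z, |env z| ≤ C + K * ‖z - xhat‖ ^ 2 := by
  set L := ρb ^ 2 / (2 * (ρb - ρ))
  have hL : 0 ≤ L := div_nonneg (sq_nonneg _) (by linarith)
  refine ⟨|env x| + ρb / 2 * ‖x - xhat‖ ^ 2 + 2 * L * ‖x - xhat‖ ^ 2, ρb / 2 + 2 * L,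
    by positivity, fun z => abs_le.2 ⟨?_, ?_⟩⟩
  · have hlow := le_env_of_isMoreauProxPoint henv hmin hbot hf hflip hρb hstat z
    have htri : ‖x - z‖ ^ 2 ≤ 2 * ‖x - xhat‖ ^ 2 + 2 * ‖z - xhat‖ ^ 2 := by
      have := norm_sub_le_norm_sub_add_norm_sub x xhat z
      rw [norm_sub_rev xhat z] at this
      nlinarith [norm_nonneg (x - z), sq_nonneg (‖x - xhat‖ - ‖z - xhat‖)]
    nlinarith [neg_abs_le (env x), mul_le_mul_of_nonneg_left htri hL,
      mul_nonneg hρb₀ (sq_nonneg ‖z - xhat‖)]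
  · have hup := env_le_of_isMoreauProxPoint henv hmin (hbot xhat) z
    nlinarith [le_abs_self (env x), mul_nonneg hρb₀ (sq_nonneg ‖x - xhat‖),
      mul_nonneg hL (sq_nonneg ‖z - xhat‖), mul_nonneg hL (sq_nonneg ‖x - xhat‖)]

end MoreauEnvelope

section Expectation

variable {Ω : Type*} [MeasurableSpace Ω] {P : Measure Ω}

theorem integrable_and_integral_le_of_lintegral_ofReal_le {Y : Ω → ℝ}
    (hY : AEStronglyMeasurable Y P) (h0 : ∀ ξ, 0 ≤ Y ξ) {c : ℝ} (hc : 0 ≤ c)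
    (h : ∫⁻ ξ, ENNReal.ofReal (Y ξ) ∂P ≤ ENNReal.ofReal c) :
    Integrable Y P ∧ ∫ ξ, Y ξ ∂P ≤ c := by
  refine ⟨⟨hY, (hasFiniteIntegral_iff_ofReal (ae_of_all _ h0)).2
    (h.trans_lt ENNReal.ofReal_lt_top)⟩, ?_⟩
  rw [integral_eq_lintegral_of_nonneg_ae (ae_of_all _ h0) hY]
  exact (ENNReal.toReal_mono ENNReal.ofReal_ne_top h).trans_eq (ENNReal.toReal_ofReal hc)

variable [IsProbabilityMeasure P] {E : Type*} [NormedAddCommGroup E] [InnerProductSpace ℝ E]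
  {Δ : Ω → E}

theorem integrable_norm_add_sq (hΔ : Integrable Δ P)
    (hΔsq : Integrable (fun ξ => ‖Δ ξ‖ ^ 2) P) (m : E) :
    Integrable (fun ξ => ‖m + Δ ξ‖ ^ 2) P := by
  simp_rw [norm_add_sq_real]
  exact ((integrable_const _).add ((hΔ.const_inner m).const_mul 2)).add hΔsq

variable [CompleteSpace E]

theorem integral_norm_add_sq (hΔ : Integrable Δ P) (hΔsq : Integrable (fun ξ => ‖Δ ξ‖ ^ 2) P)
    (hΔ0 : ∫ ξ, Δ ξ ∂P = 0) (m : E) :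
    ∫ ξ, ‖m + Δ ξ‖ ^ 2 ∂P = ‖m‖ ^ 2 + ∫ ξ, ‖Δ ξ‖ ^ 2 ∂P := by
  have hinner : Integrable (fun ξ => 2 * ⟪m, Δ ξ⟫) P := (hΔ.const_inner m).const_mul 2
  simp_rw [norm_add_sq_real]
  rw [integral_add (f := fun ξ => ‖m‖ ^ 2 + 2 * ⟪m, Δ ξ⟫) ((integrable_const _).add hinner)
      hΔsq,
    integral_add (integrable_const _) hinner, integral_const_mul,
    integral_inner hΔ, hΔ0, inner_zero_right]
  simp

theorem integral_le_of_le_add_norm_add_smul_sq {g : Ω → E} {μ : E} {σ : ℝ}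
    (hg : Integrable g P) (hmean : ∫ ξ, g ξ ∂P = μ)
    (hvar : ∫⁻ ξ, ENNReal.ofReal (‖g ξ - μ‖ ^ 2) ∂P ≤ ENNReal.ofReal (σ ^ 2)) (m : E) (a : ℝ)
    {Y : Ω → ℝ} (hY : AEStronglyMeasurable Y P) {C K c k : ℝ} (hk : 0 ≤ k)
    (habs : ∀ ξ, |Y ξ| ≤ C + K * ‖m + a • (μ - g ξ)‖ ^ 2)
    (hle : ∀ ξ, Y ξ ≤ c + k * ‖m + a • (μ - g ξ)‖ ^ 2) :
    ∫ ξ, Y ξ ∂P ≤ c + k * (‖m‖ ^ 2 + a ^ 2 * σ ^ 2) := by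
  obtain ⟨hsq, hvar'⟩ := integrable_and_integral_le_of_lintegral_ofReal_le
    (Y := fun ξ => ‖g ξ - μ‖ ^ 2) ((hg.1.sub aestronglyMeasurable_const).norm.pow 2)
    (fun _ => by positivity) (sq_nonneg σ) hvar
  have hΔ : Integrable (fun ξ => a • (μ - g ξ)) P := ((integrable_const μ).sub hg).smul a
  have hΔ0 : ∫ ξ, a • (μ - g ξ) ∂P = 0 := by
    rw [integral_smul, integral_sub (integrable_const μ) hg, hmean, integral_const]
    simp
  have hΔnorm : ∀ ξ, ‖a • (μ - g ξ)‖ ^ 2 = a ^ 2 * ‖g ξ - μ‖ ^ 2 := fun ξ => by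
    rw [norm_smul, mul_pow, Real.norm_eq_abs, sq_abs, norm_sub_rev]
  have hΔsq : Integrable (fun ξ => ‖a • (μ - g ξ)‖ ^ 2) P := by
    simp_rw [hΔnorm]
    exact hsq.const_mul _
  have hW := integrable_norm_add_sq hΔ hΔsq m
  have hYint : Integrable Y P :=
    ((integrable_const C).add (hW.const_mul K)).mono' hY (ae_of_all _ fun ξ => habs ξ)
  calc ∫ ξ, Y ξ ∂P ≤ ∫ ξ, (c + k * ‖m + a • (μ - g ξ)‖ ^ 2) ∂P :=
        integral_mono hYint ((integrable_const c).add (hW.const_mul k)) hle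
    _ = c + k * (‖m‖ ^ 2 + a ^ 2 * ∫ ξ, ‖g ξ - μ‖ ^ 2 ∂P) := by
      rw [integral_add (integrable_const c) (hW.const_mul k), integral_const_mul,
        integral_norm_add_sq hΔ hΔsq hΔ0, integral_const]
      simp_rw [hΔnorm, integral_const_mul]
      simp
    _ ≤ c + k * (‖m‖ ^ 2 + a ^ 2 * σ ^ 2) := by gcongr

end Expectation

theorem proximal_stochastic_gradient_envelope_descent_general
    {E : Type*} [NormedAddCommGroup E] [InnerProductSpace ℝ E] [FiniteDimensional ℝ E]
    [MeasurableSpace E] [BorelSpace E]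
    {Ω : Type*} [MeasurableSpace Ω] (P : Measure Ω) [IsProbabilityMeasure P]
    (f : E → ℝ) (hf : ContDiff ℝ 1 f) (ρ : ℝ) (hρ : 0 ≤ ρ)
    (hflip : ∀ u v : E, ‖gradient f u - gradient f v‖ ≤ ρ * ‖u - v‖)
    (r : E → EReal) (hrbot : ∀ y, r y ≠ ⊥)
    (hrconv : ERealConvexOn Set.univ r)
    (G : E → Ω → E) (hGmeas : Measurable fun p : E × Ω => G p.1 p.2)
    (σ : ℝ)
    (hGint : ∀ z : E, r z ≠ ⊤ → Integrable (G z) P)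
    (hGunbiased : ∀ z : E, r z ≠ ⊤ → ∫ ξ, G z ξ ∂P = gradient f z)
    (hGvar : ∀ z : E, r z ≠ ⊤ →
      ∫⁻ ξ, ENNReal.ofReal (‖G z ξ - gradient f z‖ ^ 2) ∂P ≤ ENNReal.ofReal (σ ^ 2))
    (ρb : ℝ) (hρb : ρ < ρb)
    (a : ℝ) (ha1 : 0 < a) (ha2 : a * ρb ≤ 1)
    (x : E) (hxdom : r x ≠ ⊤)
    (xhat : E)
    (hxhatmin : ∀ y : E,
      (f xhat : EReal) + r xhat + ((ρb / 2 * ‖xhat - x‖ ^ 2 : ℝ) : EReal)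
        ≤ (f y : EReal) + r y + ((ρb / 2 * ‖y - x‖ ^ 2 : ℝ) : EReal))
    (hstat : ∀ y : E,
      r xhat + ((⟪ρb • (x - xhat) - gradient f xhat, y - xhat⟫ : ℝ) : EReal) ≤ r y)
    (s : Ω → E)
    (hs : ∀ ξ : Ω, ∀ y : E,
      r (s ξ) + ((1 / (2 * a) * ‖s ξ - (x - a • G x ξ)‖ ^ 2 : ℝ) : EReal)
        ≤ r y + ((1 / (2 * a) * ‖y - (x - a • G x ξ)‖ ^ 2 : ℝ) : EReal))
    (env : E → ℝ)
    (henv : ∀ z : E,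
      (env z : EReal) = ⨅ y : E,
        (f y : EReal) + r y + ((ρb / 2 * ‖y - z‖ ^ 2 : ℝ) : EReal)) :
    ∫ ξ, env (s ξ) ∂P
      ≤ env x - a * (ρb - ρ) * ρb / 2 * ‖x - xhat‖ ^ 2 + a ^ 2 * ρb * σ ^ 2 / 2 := by
  have hρb₀ : 0 < ρb := hρ.trans_lt hρb
  have hxhat : r xhat ≠ ⊤ := ne_top_of_isMoreauProxPoint henv hxhatmin
  have hsdom : ∀ ξ, r (s ξ) ≠ ⊤ := fun ξ => IsProxPoint.ne_top (hs ξ) hxdom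
  have hxhat_sub : HasSubgradientAt r
      (a⁻¹ • (xhat + a • (ρb • (x - xhat) - gradient f xhat) - xhat)) xhat := by
    rwa [add_sub_cancel_left, smul_smul, inv_mul_cancel₀ ha1.ne', one_smul]
  set m := (1 - a * ρb) • (x - xhat) + a • (gradient f xhat - gradient f x)
  have hclose : ∀ ξ, ‖s ξ - xhat‖ ≤ ‖m + a • (gradient f x - G x ξ)‖ := fun ξ =>
    ((IsProxPoint.hasSubgradientAt hrconv hrbot ha1 (hs ξ) (hsdom ξ)).norm_sub_le ha1 hxhat_sub
      (hsdom ξ) (hrbot _) hxhat (hrbot _)).trans_eq (by congr 1; module)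
  have hsmeas : Measurable s :=
    measurable_of_isProxPoint hrconv hrbot ha1 (hGmeas.comp measurable_prodMk_left) hs hsdom
  have henvmeas : Measurable env :=
    (upperSemicontinuous_of_coe_eq_iInf_add (fun y => (f y : EReal) + r y)
      (g := fun y z => ρb / 2 * ‖y - z‖ ^ 2) (fun y => by fun_prop) henv).measurable
  obtain ⟨C, K, hK, habs⟩ := exists_abs_env_le_of_isMoreauProxPoint henv hxhatmin hrbot
    (hf.differentiable one_ne_zero) hflip hρb hρb₀.le hstat
  have hstep := integral_le_of_le_add_norm_add_smul_sq (hGint x hxdom) (hGunbiased x hxdom)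
    (hGvar x hxdom) m a (henvmeas.comp hsmeas).aestronglyMeasurable (half_pos hρb₀).le
    (fun ξ => (habs _).trans (by gcongr; exact hclose ξ))
    (fun ξ => (env_le_of_isMoreauProxPoint henv hxhatmin (hrbot xhat) (s ξ)).trans
      (by gcongr; exact hclose ξ))
  have hm : ‖m‖ ^ 2 ≤ (1 - a * (ρb - ρ)) * ‖x - xhat‖ ^ 2 :=
    norm_sq_relaxed_step_le hρ hflip hρb.le ha1.le ha2 x xhat
  refine hstep.trans ?_
  nlinarith [mul_le_mul_of_nonneg_left hm (half_pos hρb₀).le]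

/-- One step of the proximal stochastic gradient method on `φ = f + r` with `f` `C¹`-smooth
with `ρ`-Lipschitz gradient, `r` proper closed convex, an unbiased stochastic gradient
oracle `G` with variance bound `σ²`, `ρ̄ > ρ`, `α ∈ (0, 1/ρ̄]`, `x̂ = prox_{φ/ρ̄}(x)`, and
`ρ̄(x − x̂) − ∇f(x̂) ∈ ∂r(x̂)`.  The step `x⁺(ξ) = prox_{αr}(x − αG(x,ξ))` decreases the
Moreau envelope `env = φ_{1/ρ̄}` in expectation:
`E[env(x⁺(ξ))] ≤ env(x) − (α(ρ̄ − ρ)ρ̄/2)‖x − x̂‖² + α²ρ̄σ²/2`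
(recall `‖∇φ_{1/ρ̄}(x)‖ = ρ̄‖x − x̂‖`). -/
theorem proximal_stochastic_gradient_envelope_descent
    {E : Type*} [NormedAddCommGroup E] [InnerProductSpace ℝ E] [FiniteDimensional ℝ E]
    [MeasurableSpace E] [BorelSpace E]
    {Ω : Type*} [MeasurableSpace Ω] (P : Measure Ω) [IsProbabilityMeasure P]
    (f : E → ℝ) (hf : ContDiff ℝ 1 f) (ρ : ℝ) (hρ : 0 ≤ ρ)
    (hflip : ∀ u v : E, ‖gradient f u - gradient f v‖ ≤ ρ * ‖u - v‖)
    (r : E → EReal) (hrbot : ∀ y, r y ≠ ⊥) (hrproper : ∃ y, r y ≠ ⊤)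
    (hrlsc : LowerSemicontinuous r) (hrconv : ERealConvexOn Set.univ r)
    (G : E → Ω → E) (hGmeas : Measurable fun p : E × Ω => G p.1 p.2)
    (σ : ℝ)
    (hGint : ∀ z : E, r z ≠ ⊤ → Integrable (G z) P)
    (hGunbiased : ∀ z : E, r z ≠ ⊤ → ∫ ξ, G z ξ ∂P = gradient f z)
    (hGvar : ∀ z : E, r z ≠ ⊤ →
      ∫⁻ ξ, ENNReal.ofReal (‖G z ξ - gradient f z‖ ^ 2) ∂P ≤ ENNReal.ofReal (σ ^ 2))
    (ρb : ℝ) (hρb : ρ < ρb)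
    (a : ℝ) (ha1 : 0 < a) (ha2 : a * ρb ≤ 1)
    (x : E) (hxdom : r x ≠ ⊤)
    (xhat : E)
    (hxhatmin : ∀ y : E,
      (f xhat : EReal) + r xhat + ((ρb / 2 * ‖xhat - x‖ ^ 2 : ℝ) : EReal)
        ≤ (f y : EReal) + r y + ((ρb / 2 * ‖y - x‖ ^ 2 : ℝ) : EReal))
    (hstat : ∀ y : E,
      r xhat + ((⟪ρb • (x - xhat) - gradient f xhat, y - xhat⟫ : ℝ) : EReal) ≤ r y)
    (s : Ω → E)
    (hs : ∀ ξ : Ω, ∀ y : E,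
      r (s ξ) + ((1 / (2 * a) * ‖s ξ - (x - a • G x ξ)‖ ^ 2 : ℝ) : EReal)
        ≤ r y + ((1 / (2 * a) * ‖y - (x - a • G x ξ)‖ ^ 2 : ℝ) : EReal))
    (env : E → ℝ)
    (henv : ∀ z : E,
      (env z : EReal) = ⨅ y : E,
        (f y : EReal) + r y + ((ρb / 2 * ‖y - z‖ ^ 2 : ℝ) : EReal)) :
    ∫ ξ, env (s ξ) ∂P
      ≤ env x - a * (ρb - ρ) * ρb / 2 * ‖x - xhat‖ ^ 2 + a ^ 2 * ρb * σ ^ 2 / 2 :=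
  proximal_stochastic_gradient_envelope_descent_general P f hf ρ hρ hflip r hrbot hrconv G hGmeas σ
    hGint hGunbiased hGvar ρb hρb a ha1 ha2 x hxdom xhat hxhatmin hstat s hs env henv
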